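/- arXiv:2307.01625 — 5 statements merged into one kernel-verified Lean document; each statement's English description precedes it below -/
import Mathlib

section
/- Let k ≥ 1 and M with 0 ≤ M ≤ k be integers. Then b_{k,M}(2,0) = (−1)^{k(k−1)/2} Σ_{l₀+l₁+⋯+l_k = 2M} Σ_{m₀+m₁+⋯+m_k = 2l₀} (−2)^{−m₀} · C(2M; l₀,…,l_k) · C(2l₀; m₀,…,m_k) · ( ∏_{i=1}^{k} 1/(2k − i + 2l_i + m_i)! ) · ∏_{1≤i<j≤k}( 2l_j − 2l_i + m_j − m_i − j + i ), the sums being over nonnegative integers l₀,…,l_k with sum 2M and m₀,…,m_k with sum 2l₀. -/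
open MeasureTheory Finset

noncomputable section

/-- `besselFactor m x = ∑_{j≥0} x^j/(j!·(m+j)!)`, so that for `x ≥ 0` one has
`I_m(2√x) = x^{m/2} · besselFactor m x`, where `I_m` is the modified Bessel function of the
first kind. -/
def besselFactor (m : ℕ) (x : ℝ) : ℝ := ∑' j : ℕ, x ^ j / (j.factorial * (m + j).factorial)

/-- The coefficient `b_{k,M}(2,0)`.  Here
`e^{-x/2} · det_{k×k}(besselFactor (2lᵢ+i+j-1) x)` is exactly the analytic extension at
`x = 0` of `e^{-x/2} · x^{h-2M-k²/2} · det_{k×k}(I_{2lᵢ+i+j-1}(2√x))`, since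
`I_m(2√x) = x^{m/2}·besselFactor m x` and the determinant of the `x^{m/2}` factors contributes
exactly `x^{k²/2 + Σᵢ lᵢ} = x^{k²/2 + 2M - h}`. -/
def b20 (k M : ℕ) : ℝ :=
  (-1 : ℝ) ^ (k * (k - 1) / 2) *
    ∑ h ∈ Finset.range (2 * M + 1),
      ∑ l ∈ (Fintype.piFinset fun _ : Fin k => Finset.range (2 * M + 1)).filter
          (fun l => h + ∑ i, l i = 2 * M),
        (Nat.multinomial Finset.univ (Fin.cons h l) : ℝ) *
          iteratedDeriv (2 * h)
            (fun x : ℝ => Real.exp (-x / 2) *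
              (Matrix.of fun i j : Fin k =>
                besselFactor (2 * l i + (i : ℕ) + (j : ℕ) + 1) x).det) 0

/-!
Expanding the determinant and applying the Leibniz rule to each of its products (the factor
`e^{-x/2}` times one Bessel factor per row), the `n`-th derivative at `0` becomes a sum over
compositions `m` of `n` of `multinomial(m) · (-1/2)^{m₀} · det (1 / (aᵢⱼ + mᵢ)!)`, because the
`j`-th derivative of `besselFactor ν` at `0` is `1/(ν+j)!`. After reversing the order of rows and
columns (and relabelling `l`), the matrix is `(1/(eᵢ - j)!)`, columns `j = 0, …, k-1`, with
`eᵢ = 2k - i + 2lᵢ + mᵢ`.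
Pulling `1/eᵢ!` out of row `i` leaves the falling factorials `eᵢ(eᵢ-1)⋯(eᵢ-j+1)`, values of monic
polynomials of degree `j`, so the determinant is the Vandermonde product `∏_{i<j} (eⱼ - eᵢ)`.
-/

theorem Finset.Nat.sum_antidiagonalTuple_succ {M : Type*} [AddCommMonoid M] (r n : ℕ)
    (F : (Fin (r + 1) → ℕ) → M) :
    ∑ m ∈ Nat.antidiagonalTuple (r + 1) n, F m =
      ∑ p ∈ antidiagonal n, ∑ m ∈ Nat.antidiagonalTuple r p.2, F (Fin.cons p.1 m) := by
  show ((List.Nat.antidiagonalTuple (r + 1) n : Multiset _).map F).sum = _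
  rw [List.Nat.antidiagonalTuple, ← Multiset.coe_bind, Multiset.map_bind, Multiset.sum_bind]
  simp only [← Multiset.map_coe, Multiset.map_map]
  rfl

theorem Finset.Nat.sum_antidiagonalTuple_comp_perm {M : Type*} [AddCommMonoid M] {r n : ℕ}
    (σ : Equiv.Perm (Fin r)) (F : (Fin r → ℕ) → M) :
    ∑ m ∈ Nat.antidiagonalTuple r n, F (m ∘ σ) = ∑ m ∈ Nat.antidiagonalTuple r n, F m := by
  refine sum_nbij' (· ∘ σ) (· ∘ σ.symm) ?_ ?_ ?_ ?_ fun _ _ => rfl <;>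
    simp [Nat.mem_antidiagonalTuple, Function.comp_def, Equiv.sum_comp]

theorem Finset.Nat.filter_piFinset_range_eq_antidiagonalTuple {r n s : ℕ} (hs : s ≤ n) :
    (Fintype.piFinset fun _ : Fin r => range (n + 1)).filter (fun m => ∑ i, m i = s) =
      Nat.antidiagonalTuple r s := by
  ext m
  simp only [mem_filter, Fintype.mem_piFinset, mem_range, Nat.mem_antidiagonalTuple,
    and_iff_right_iff_imp]
  intro hm i
  have := single_le_sum (fun j _ => Nat.zero_le (m j)) (mem_univ i)
  omega

theorem Nat.multinomial_univ_fin_cons {r : ℕ} (a : ℕ) (m : Fin r → ℕ) :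
    Nat.multinomial univ (Fin.cons a m : Fin (r + 1) → ℕ) =
      (a + ∑ i, m i).choose a * Nat.multinomial univ m := by
  rw [Fin.univ_succ, Nat.multinomial_cons]
  simp [Nat.multinomial, Finset.sum_map, Finset.prod_map]

theorem Nat.multinomial_univ_comp_perm {ι : Type*} [Fintype ι] (f : ι → ℕ) (σ : Equiv.Perm ι) :
    Nat.multinomial univ (f ∘ σ) = Nat.multinomial univ f := by
  simp only [Nat.multinomial, Function.comp_apply, Equiv.sum_comp,
    Equiv.prod_comp σ fun i => (f i).factorial]

theorem Finset.prod_filter_fin_lt {M : Type*} [CommMonoid M] {K : ℕ} (f : Fin K → Fin K → M) :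
    ∏ p ∈ univ.filter (fun p : Fin K × Fin K => p.1 < p.2), f p.1 p.2 =
      ∏ i, ∏ j ∈ Ioi i, f i j := by
  rw [prod_filter, Fintype.prod_prod_type]
  refine prod_congr rfl fun i _ => ?_
  rw [← filter_lt_eq_Ioi, prod_filter]

section Leibniz

variable {𝕜 𝔸 : Type*} [NontriviallyNormedField 𝕜] [NormedCommRing 𝔸] [NormedAlgebra 𝕜 𝔸]

theorem iteratedDeriv_fin_prod {r n : ℕ} {f : Fin r → 𝕜 → 𝔸} {x : 𝕜}
    (hf : ∀ i, ContDiffAt 𝕜 n (f i) x) :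
    iteratedDeriv n (fun y => ∏ i, f i y) x =
      ∑ m ∈ Nat.antidiagonalTuple r n,
        (Nat.multinomial univ m : 𝔸) * ∏ i, iteratedDeriv (m i) (f i) x := by
  induction r generalizing n with
  | zero => cases n <;> simp [iteratedDeriv_const]
  | succ r ih =>
    simp only [Fin.prod_univ_succ]
    rw [iteratedDeriv_fun_mul (hf 0) (contDiffAt_prod fun i _ => hf i.succ),
      Nat.sum_antidiagonalTuple_succ, Nat.sum_antidiagonal_eq_sum_range_succ_mk]
    refine sum_congr rfl fun j hj => ?_
    rw [ih fun i => (hf i.succ).of_le (by norm_cast; omega), mul_sum]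
    refine sum_congr rfl fun m hm => ?_
    rw [Nat.multinomial_univ_fin_cons, Nat.mem_antidiagonalTuple.1 hm,
      Nat.add_sub_of_le (by simpa [Nat.lt_succ_iff] using hj)]
    simp only [Fin.cons_zero, Fin.cons_succ]
    push_cast
    ring

theorem iteratedDeriv_mul_det {k n : ℕ} {g : 𝕜 → 𝔸} {G : Fin k → Fin k → 𝕜 → 𝔸} {x : 𝕜}
    (hg : ContDiffAt 𝕜 n g x) (hG : ∀ i j, ContDiffAt 𝕜 n (G i j) x) :
    iteratedDeriv n (fun y => g y * (Matrix.of fun i j => G i j y).det) x =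
      ∑ m ∈ Nat.antidiagonalTuple (k + 1) n, (Nat.multinomial univ m : 𝔸) *
        (iteratedDeriv (m 0) g x *
          (Matrix.of fun i j => iteratedDeriv (m i.succ) (G i j) x).det) := by
  have hdet : ∀ A : Matrix (Fin k) (Fin k) 𝔸,
      A.det = ∑ σ : Equiv.Perm (Fin k), (Equiv.Perm.sign σ : 𝔸) * ∏ i, A i (σ i) := by
    intro A
    rw [← Matrix.det_transpose, Matrix.det_apply]
    simp [Units.smul_def]
  set F : Equiv.Perm (Fin k) → Fin (k + 1) → 𝕜 → 𝔸 := fun σ => Fin.cons g fun i => G i (σ i)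
  have hF : ∀ σ i, ContDiffAt 𝕜 n (F σ i) x := fun σ i => Fin.cases hg (fun i => hG _ _) i
  have hexpand : (fun y => g y * (Matrix.of fun i j => G i j y).det) =
      fun y => ∑ σ : Equiv.Perm (Fin k), (Equiv.Perm.sign σ : 𝔸) * ∏ i, F σ i y := by
    funext y
    simp only [hdet, mul_sum, F, Fin.prod_univ_succ, Fin.cons_zero, Fin.cons_succ,
      Matrix.of_apply]
    ring_nf
  rw [hexpand, iteratedDeriv_fun_sum fun σ _ =>
    contDiffAt_const.mul (contDiffAt_prod fun i _ => hF σ i)]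
  simp only [iteratedDeriv_const_mul _ (contDiffAt_prod fun i _ => hF _ i),
    iteratedDeriv_fin_prod (hF _), mul_sum, hdet]
  rw [sum_comm]
  refine sum_congr rfl fun m _ => sum_congr rfl fun σ _ => ?_
  simp only [F, Fin.prod_univ_succ, Fin.cons_zero, Fin.cons_succ, Matrix.of_apply]
  ring

end Leibniz

section PowerSeries

variable {𝕜 : Type*} [NontriviallyNormedField 𝕜]

theorem hasFPowerSeriesOnBall_ofScalars_of_hasSum {c : ℕ → 𝕜} {f : 𝕜 → 𝕜}
    (hf : ∀ x, HasSum (fun n => c n * x ^ n) (f x)) :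
    HasFPowerSeriesOnBall f (FormalMultilinearSeries.ofScalars 𝕜 c) 0 1 := by
  have hc : Filter.Tendsto (fun n => ‖c n‖) Filter.atTop (nhds 0) := by
    simpa using ((hf 1).summable.tendsto_atTop_zero).norm
  refine ⟨?_, one_pos, fun {y} _ => ?_⟩
  · simpa using FormalMultilinearSeries.le_radius_of_tendsto (r := 1) _
      (by simpa [FormalMultilinearSeries.ofScalars_norm] using hc)
  · simpa [FormalMultilinearSeries.ofScalars_apply_eq, mul_comm] using hf y

theorem HasFPowerSeriesOnBall.iteratedDeriv_zero_ofScalars [CompleteSpace 𝕜] {c : ℕ → 𝕜}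
    {f : 𝕜 → 𝕜} {r : ENNReal}
    (hf : HasFPowerSeriesOnBall f (FormalMultilinearSeries.ofScalars 𝕜 c) 0 r) (n : ℕ) :
    iteratedDeriv n f 0 = n.factorial * c n := by
  rw [iteratedDeriv_eq_iteratedFDeriv, ← hf.factorial_smul 1 n,
    FormalMultilinearSeries.ofScalars_apply_eq]
  simp [nsmul_eq_mul]

end PowerSeries

theorem Matrix.det_inv_factorial_sub {R : Type*} [Field R] [CharZero R] {K : ℕ} (e : Fin K → ℕ)
    (he : ∀ i (j : Fin K), (j : ℕ) ≤ e i) :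
    (Matrix.of fun i j : Fin K => ((e i - j).factorial : R)⁻¹).det =
      (∏ i, ((e i).factorial : R))⁻¹ * ∏ i, ∏ j ∈ Ioi i, ((e j : R) - e i) := by
  have hentry : ∀ i j : Fin K, ((e i - j).factorial : R)⁻¹ =
      ((e i).factorial : R)⁻¹ * (descPochhammer R j).eval (e i : R) := by
    intro i j
    have hdesc : ((e i).descFactorial j : R) ≠ 0 := by
      exact_mod_cast (Nat.descFactorial_pos.2 (he i j)).ne'
    rw [descPochhammer_eval_eq_descFactorial, ← Nat.factorial_mul_descFactorial (he i j)]
    push_cast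
    field_simp
  have hscale := Matrix.det_mul_column (fun i => ((e i).factorial : R)⁻¹)
    (Matrix.of fun i (j : Fin K) => (descPochhammer R j).eval (e i : R))
  simp only [Matrix.of_apply] at hscale
  simp_rw [hentry]
  rw [hscale, prod_inv_distrib, ← Matrix.det_vandermonde,
    Matrix.det_eval_matrixOfPolynomials_eq_det_vandermonde _ _
      (fun j => descPochhammer_natDegree R j) (fun j => monic_descPochhammer R j)]

theorem hasSum_besselFactor (ν : ℕ) (x : ℝ) :
    HasSum (fun j => ((j.factorial * (ν + j).factorial : ℕ) : ℝ)⁻¹ * x ^ j)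
      (besselFactor ν x) := by
  have hs : Summable fun j : ℕ => x ^ j / (j.factorial * (ν + j).factorial : ℝ) := by
    refine Summable.of_norm_bounded (Real.summable_pow_div_factorial |x|) fun j => ?_
    have hj : (0 : ℝ) < j.factorial := by positivity
    have hνj : (1 : ℝ) ≤ (ν + j).factorial := by exact_mod_cast (ν + j).factorial_pos
    rw [norm_div, norm_pow, Real.norm_eq_abs, norm_mul, Real.norm_natCast, Real.norm_natCast]
    exact div_le_div_of_nonneg_left (by positivity) hj (le_mul_of_one_le_right hj.le hνj)
  simpa [besselFactor, div_eq_inv_mul] using hs.hasSum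

theorem hasFPowerSeriesOnBall_besselFactor (ν : ℕ) :
    HasFPowerSeriesOnBall (besselFactor ν)
      (FormalMultilinearSeries.ofScalars ℝ
        fun j => ((j.factorial * (ν + j).factorial : ℕ) : ℝ)⁻¹) 0 1 :=
  hasFPowerSeriesOnBall_ofScalars_of_hasSum (hasSum_besselFactor ν)

theorem iteratedDeriv_besselFactor_zero (ν n : ℕ) :
    iteratedDeriv n (besselFactor ν) 0 = ((ν + n).factorial : ℝ)⁻¹ := by
  rw [(hasFPowerSeriesOnBall_besselFactor ν).iteratedDeriv_zero_ofScalars]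
  have : (n.factorial : ℝ) ≠ 0 := by positivity
  push_cast
  field_simp

theorem iteratedDeriv_exp_neg_half_zero (n : ℕ) :
    iteratedDeriv n (fun x : ℝ => Real.exp (-x / 2)) 0 = (-1 / 2) ^ n := by
  have : (fun x : ℝ => Real.exp (-x / 2)) = fun x => Real.exp (-1 / 2 * x) := by
    funext x; ring_nf
  simp [this]

theorem iteratedDeriv_exp_mul_det_besselFactor_zero {k : ℕ} (a : Fin k → Fin k → ℕ) (n : ℕ) :
    iteratedDeriv n (fun x => Real.exp (-x / 2) *
        (Matrix.of fun i j => besselFactor (a i j) x).det) 0 =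
      ∑ m ∈ Nat.antidiagonalTuple (k + 1) n, (Nat.multinomial univ m : ℝ) *
        ((-1 / 2) ^ m 0 * (Matrix.of fun i j => ((a i j + m i.succ).factorial : ℝ)⁻¹).det) := by
  rw [iteratedDeriv_mul_det (by fun_prop)
    fun i j => (hasFPowerSeriesOnBall_besselFactor _).analyticAt.contDiffAt]
  simp only [iteratedDeriv_exp_neg_half_zero, iteratedDeriv_besselFactor_zero]

theorem iteratedDeriv_exp_mul_det_besselFactor_rev_zero {k : ℕ} (l : Fin k → ℕ) (n : ℕ) :
    iteratedDeriv n (fun x => Real.exp (-x / 2) *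
        (Matrix.of fun i j : Fin k => besselFactor (2 * l i.rev + i + j + 1) x).det) 0 =
      ∑ m ∈ Nat.antidiagonalTuple (k + 1) n,
        (-2 : ℝ) ^ (-(m 0 : ℤ)) * (Nat.multinomial univ m : ℝ) *
          (∏ i : Fin k, (1 : ℝ) / ((2 * k - ((i : ℕ) + 1) + 2 * l i + m i.succ).factorial : ℝ)) *
          ∏ p ∈ univ.filter (fun p : Fin k × Fin k => p.1 < p.2),
            (((2 * (l p.2 : ℤ) - 2 * (l p.1 : ℤ) + (m p.2.succ : ℤ) - (m p.1.succ : ℤ)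
              - ((p.2 : ℕ) : ℤ) + ((p.1 : ℕ) : ℤ)) : ℤ) : ℝ) := by
  have hrev : ∀ x, (Matrix.of fun i j : Fin k => besselFactor (2 * l i.rev + i + j + 1) x).det =
      (Matrix.of fun i j : Fin k =>
        besselFactor (2 * l i + (k - (i + 1)) + (k - (j + 1)) + 1) x).det := by
    intro x
    rw [← Matrix.det_submatrix_equiv_self Fin.revPerm]
    congr
    ext i j
    simp [Fin.val_rev]
  simp_rw [hrev]
  rw [iteratedDeriv_exp_mul_det_besselFactor_zero]
  refine sum_congr rfl fun m _ => ?_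
  set e : Fin k → ℕ := fun i => 2 * k - ((i : ℕ) + 1) + 2 * l i + m i.succ
  have hentry : ∀ i j : Fin k,
      2 * l i + (k - (i + 1)) + (k - (j + 1)) + 1 + m i.succ = e i - j := by
    intro i j; simp only [e]; omega
  simp_rw [hentry]
  rw [Matrix.det_inv_factorial_sub e fun i j => by simp only [e]; omega]
  have hpair : ∀ i j : Fin k, (((2 * (l j : ℤ) - 2 * (l i : ℤ) + (m j.succ : ℤ) - (m i.succ : ℤ)
      - ((j : ℕ) : ℤ) + ((i : ℕ) : ℤ)) : ℤ) : ℝ) = (e j : ℝ) - e i := by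
    intro i j
    simp only [e]
    push_cast [Nat.cast_sub (by omega : (i : ℕ) + 1 ≤ 2 * k),
      Nat.cast_sub (by omega : (j : ℕ) + 1 ≤ 2 * k)]
    ring
  simp only [hpair]
  rw [prod_filter_fin_lt fun i j => (e j : ℝ) - e i, zpow_neg, zpow_natCast, ← inv_pow,
    prod_div_distrib, prod_const_one]
  ring

/-- `l, m : Fin (k+1) → ℕ` encode `(l₀,…,l_k)` and `(m₀,…,m_k)` with `lᵢ = l i.succ`; the row
`i : Fin k` is the paper's row `i+1`, so `−j+i` reads `−p.2+p.1`. -/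
theorem b20_explicit_general (k M : ℕ) :
    b20 k M =
      (-1 : ℝ) ^ (k * (k - 1) / 2) *
        ∑ l ∈ (Fintype.piFinset fun _ : Fin (k + 1) => Finset.range (2 * M + 1)).filter
            (fun l => ∑ i, l i = 2 * M),
          ∑ m ∈ (Fintype.piFinset fun _ : Fin (k + 1) => Finset.range (2 * l 0 + 1)).filter
              (fun m => ∑ i, m i = 2 * l 0),
            (-2 : ℝ) ^ (-(m 0 : ℤ)) *
              (Nat.multinomial Finset.univ l : ℝ) * (Nat.multinomial Finset.univ m : ℝ) *
              (∏ i : Fin k,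
                (1 : ℝ) / ((2 * k - ((i : ℕ) + 1) + 2 * l i.succ + m i.succ).factorial : ℝ)) *
              ∏ p ∈ Finset.univ.filter (fun p : Fin k × Fin k => p.1 < p.2),
                (((2 * (l p.2.succ : ℤ) - 2 * (l p.1.succ : ℤ) + (m p.2.succ : ℤ)
                    - (m p.1.succ : ℤ) - ((p.2 : ℕ) : ℤ) + ((p.1 : ℕ) : ℤ)) : ℤ) : ℝ) := by
  have hinner : ∀ h ∈ range (2 * M + 1),
      (Fintype.piFinset fun _ : Fin k => range (2 * M + 1)).filter
        (fun l => h + ∑ i, l i = 2 * M) = Nat.antidiagonalTuple k (2 * M - h) := by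
    intro h hh
    rw [← Nat.filter_piFinset_range_eq_antidiagonalTuple (Nat.sub_le _ _)]
    exact filter_congr fun l _ => by rw [mem_range] at hh; omega
  rw [b20, Nat.filter_piFinset_range_eq_antidiagonalTuple le_rfl,
    Nat.sum_antidiagonalTuple_succ, Nat.sum_antidiagonal_eq_sum_range_succ_mk]
  congr 1
  refine sum_congr rfl fun h hh => ?_
  rw [hinner h hh, ← Nat.sum_antidiagonalTuple_comp_perm Fin.revPerm]
  refine sum_congr rfl fun l _ => ?_
  have hmult : Nat.multinomial univ (Fin.cons h (l ∘ Fin.revPerm) : Fin (k + 1) → ℕ) =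
      Nat.multinomial univ (Fin.cons h l : Fin (k + 1) → ℕ) := by
    rw [Nat.multinomial_univ_fin_cons, Nat.multinomial_univ_fin_cons,
      Nat.multinomial_univ_comp_perm, Function.comp_def, Equiv.sum_comp]
  simp only [Fin.cons_zero, Fin.cons_succ, hmult, Function.comp_apply, Fin.revPerm_apply,
    iteratedDeriv_exp_mul_det_besselFactor_rev_zero,
    Nat.filter_piFinset_range_eq_antidiagonalTuple le_rfl, mul_sum]
  exact sum_congr rfl fun m _ => by ring

/-- **Theorem (explicit combinatorial formula for `b_{k,M}(2,0)`).**
Below `l, m : Fin (k+1) → ℕ` encode `(l₀,l₁,…,l_k)` and `(m₀,m₁,…,m_k)`, with `l₀ = l 0`,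
`lᵢ = l i.succ` for `i = 1,…,k` (indices `i,j = 1,…,k` realised as `Fin k` with `1`-based
index `i+1`; note `−j+i` (1-based) equals `−(p.2)+p.1` (0-based)). -/
theorem b20_explicit (k M : ℕ) (hk : 1 ≤ k) (hM : M ≤ k) :
    b20 k M =
      (-1 : ℝ) ^ (k * (k - 1) / 2) *
        ∑ l ∈ (Fintype.piFinset fun _ : Fin (k + 1) => Finset.range (2 * M + 1)).filter
            (fun l => ∑ i, l i = 2 * M),
          ∑ m ∈ (Fintype.piFinset fun _ : Fin (k + 1) => Finset.range (2 * l 0 + 1)).filter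
              (fun m => ∑ i, m i = 2 * l 0),
            (-2 : ℝ) ^ (-(m 0 : ℤ)) *
              (Nat.multinomial Finset.univ l : ℝ) * (Nat.multinomial Finset.univ m : ℝ) *
              (∏ i : Fin k,
                (1 : ℝ) / ((2 * k - ((i : ℕ) + 1) + 2 * l i.succ + m i.succ).factorial : ℝ)) *
              ∏ p ∈ Finset.univ.filter (fun p : Fin k × Fin k => p.1 < p.2),
                (((2 * (l p.2.succ : ℤ) - 2 * (l p.1.succ : ℤ) + (m p.2.succ : ℤ)
                    - (m p.1.succ : ℤ) - ((p.2 : ℕ) : ℤ) + ((p.1 : ℕ) : ℤ)) : ℤ) : ℝ) :=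
  b20_explicit_general k M
end
end

section
/- Let k ≥ 1, r ≥ 1 and n ≥ 0 be integers, let w₁,…,w_k be nonzero complex numbers, and let N be a complex number. Then: (i) ( Σ_{m₁+2m₂+⋯+n·mₙ=n} n!/(m₁!⋯mₙ!) · ( −N + Σ_{l=1}^{k} 1/w_l )^{m₁} · ∏_{j=2}^{n} ( (1/j)·Σ_{l=1}^{k} 1/w_l^{j} )^{m_j} )^{r} = Σ ( ∏_{j=1}^{r} (−N)^{n−Σ_{l=1}^{k} s_{lj}} · C(n, Σ_{l=1}^{k} s_{lj}) · (Σ_{l=1}^{k} s_{lj})! ) / ∏_{l=1}^{k} w_l^{Σ_{j=1}^{r} s_{lj}}, the right-hand sum being over all nonnegative integers s_{lj} (1 ≤ l ≤ k, 1 ≤ j ≤ r) with Σ_{l=1}^{k} s_{lj} ≤ n for each j; and (ii) ( Σ_{m₁+2m₂+⋯+n·mₙ=n} n!/(m₁!⋯mₙ!) · ∏_{j=1}^{n} ( (1/j)·Σ_{l=1}^{k} 1/w_l^{j} )^{m_j} )^{r} = Σ (n!)^{r} / ∏_{l=1}^{k} w_l^{Σ_{j=1}^{r} h_{lj}}, the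 right-hand sum being over all nonnegative integers h_{lj} (1 ≤ l ≤ k, 1 ≤ j ≤ r) with Σ_{l=1}^{k} h_{lj} = n for each j. -/
/-
The partition sum is `n!` times the coefficient of `X ^ n` in `exp (∑ j ≤ n, c_j X ^ j)`, and the
`c_j` are the Taylor coefficients of `log (exp (-N X) * ∏ l, 1 / (1 - X / w_l))`. Both series solve
an equation `f' = D f` with `f(0) = 1` and the same `D` below degree `n`, so their `n`-th
coefficients agree; for the product of the exponential and geometric series that coefficient is
read off directly. The `r`-th power is expanded by distributivity, and part (ii) is the case
`N = 0`, where only the tuples with `∑ l, s l = n` survive.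
-/

open Finset PowerSeries
open scoped Nat

noncomputable section

theorem Derivation.map_prod_of_map_eq_mul {ι R A : Type*} [CommSemiring R] [CommSemiring A]
    [Algebra R A] (D : Derivation R A A) (s : Finset ι) (f g : ι → A)
    (h : ∀ i ∈ s, D (f i) = g i * f i) :
    D (∏ i ∈ s, f i) = (∑ i ∈ s, g i) * ∏ i ∈ s, f i := by
  classical
  induction s using Finset.induction_on with
  | empty => simp
  | insert a s ha ih =>
    rw [prod_insert ha, sum_insert ha, Derivation.leibniz, smul_eq_mul, smul_eq_mul,
      ih fun i hi => h i (mem_insert_of_mem hi), h a (mem_insert_self a s)]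
    ring

theorem Finset.pow_sum_filter_div_prod_pow {K ι : Type*} [Semifield K] [Fintype ι]
    (A : Finset (ι → ℕ)) (P : (ι → ℕ) → Prop) [DecidablePred P] (a : (ι → ℕ) → K)
    (w : ι → K) (r : ℕ) :
    (∑ s ∈ A.filter P, a s / ∏ l, w l ^ s l) ^ r =
      ∑ p ∈ (Fintype.piFinset fun _ : Fin r => A).filter (fun p => ∀ j, P (p j)),
        (∏ j, a (p j)) / ∏ l, w l ^ ∑ j, p j l := by
  have hpi : (Fintype.piFinset fun _ : Fin r => A.filter P) =
      (Fintype.piFinset fun _ : Fin r => A).filter (fun p => ∀ j, P (p j)) := by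
    ext p
    simp [forall_and]
  rw [sum_pow', hpi]
  refine sum_congr rfl fun p _ => ?_
  rw [prod_div_distrib, prod_comm]
  simp only [prod_pow_eq_pow_sum]

namespace PowerSeries

theorem coeff_eq_coeff_of_derivative_eq_mul {R : Type*} [CommRing R] [IsAddTorsionFree R]
    {f g D E : R⟦X⟧} (hf : d⁄dX R f = D * f) (hg : d⁄dX R g = E * g)
    (h0 : constantCoeff f = constantCoeff g) {n : ℕ} (hDE : ∀ i < n, coeff i D = coeff i E) :
    ∀ i ≤ n, coeff i f = coeff i g := by
  intro i
  induction i using Nat.strong_induction_on with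
  | _ i ih =>
  cases i with
  | zero => simpa only [coeff_zero_eq_constantCoeff_apply] using fun _ => h0
  | succ i =>
    intro hi
    have hrec {F G : R⟦X⟧} (h : d⁄dX R F = G * F) :
        (i + 1) • coeff (i + 1) F = ∑ p ∈ antidiagonal i, coeff p.1 G * coeff p.2 F := by
      rw [← coeff_mul, ← h, coeff_derivative, nsmul_eq_mul, mul_comm]
      push_cast
      ring
    have key : (i + 1) • coeff (i + 1) f = (i + 1) • coeff (i + 1) g := by
      rw [hrec hf, hrec hg]
      refine sum_congr rfl fun p hp => ?_
      rw [HasAntidiagonal.mem_antidiagonal] at hp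
      rw [hDE p.1 (by omega), ih p.2 (by omega) (by omega)]
    exact (smul_right_inj (Nat.succ_ne_zero i)).mp key

theorem coeff_prod_univ {ι R : Type*} [Fintype ι] [DecidableEq ι] [CommSemiring R]
    (f : ι → R⟦X⟧) (d : ℕ) :
    coeff d (∏ i, f i) = ∑ s ∈ piAntidiag univ d, ∏ i, coeff (s i) (f i) := by
  rw [coeff_prod, finsuppAntidiag, sum_map]
  exact sum_attach (piAntidiag univ d) fun s => ∏ i, coeff (s i) (f i)

section CommSemiring

variable {R : Type*} [CommSemiring R]

def geomSeries (y : R) : R⟦X⟧ := mk (y ^ ·)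

theorem derivative_geomSeries (y : R) :
    d⁄dX R (geomSeries y) = (C y * geomSeries y) * geomSeries y := by
  ext n
  rw [coeff_derivative, mul_assoc, coeff_C_mul, coeff_mul]
  simp only [geomSeries, coeff_mk]
  rw [sum_congr rfl fun p hp => by rw [← pow_add, HasAntidiagonal.mem_antidiagonal.mp hp],
    sum_const, Nat.card_antidiagonal, nsmul_eq_mul, pow_succ]
  push_cast
  ring

theorem coeff_prod_geomSeries {ι : Type*} [Fintype ι] [DecidableEq ι] (y : ι → R) (d : ℕ) :
    coeff d (∏ i, geomSeries (y i)) = ∑ s ∈ piAntidiag univ d, ∏ i, y i ^ s i := by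
  simp only [coeff_prod_univ, geomSeries, coeff_mk]

end CommSemiring

section Field

variable {K : Type*} [Field K]

def expMonomial (c : K) (e : ℕ) : K⟦X⟧ :=
  mk fun i => if e ∣ i then c ^ (i / e) / (i / e)! else 0

variable [CharZero K]

theorem derivative_expMonomial (c : K) (e : ℕ) :
    d⁄dX K (expMonomial c (e + 1)) = monomial e (c * (e + 1)) * expMonomial c (e + 1) := by
  ext i
  rw [coeff_derivative, monomial_eq_C_mul_X_pow, mul_assoc, coeff_C_mul, coeff_X_pow_mul']
  simp only [expMonomial, coeff_mk]
  rcases lt_or_ge i e with hi | hi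
  · rw [if_neg (Nat.not_dvd_of_pos_of_lt i.succ_pos (by omega)), if_neg (by omega), zero_mul,
      mul_zero]
  obtain ⟨q, rfl⟩ := Nat.exists_eq_add_of_le hi
  rw [if_pos hi, Nat.add_sub_cancel_left, show e + q + 1 = q + (e + 1) by ring]
  simp only [Nat.dvd_add_self_right]
  split_ifs with hq
  · obtain ⟨t, rfl⟩ := hq
    rw [Nat.add_div_right _ e.succ_pos, Nat.mul_div_cancel_left _ e.succ_pos, pow_succ,
      Nat.factorial_succ]
    push_cast
    field_simp
    ring
  · simp

theorem factorial_mul_coeff_prod_expMonomial (c : ℕ → K) (n : ℕ) :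
    (n ! : K) * coeff n (∏ j : Fin n, expMonomial (c (j + 1)) (j + 1)) =
      ∑ m ∈ (Fintype.piFinset fun _ : Fin n => range (n + 1)).filter
          (fun m => ∑ j : Fin n, ((j : ℕ) + 1) * m j = n),
        ((n ! : K) / ∏ j, ((m j)! : K)) * ∏ j : Fin n, c (j + 1) ^ m j := by
  rw [coeff_prod_univ, mul_sum]
  symm
  refine sum_of_injOn (fun m j => (j + 1) * m j) ?_ ?_ ?_ ?_
  · intro m _ m' _ h
    funext j
    exact Nat.eq_of_mul_eq_mul_left j.succ_pos (congrFun h j)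
  · intro m hm
    simp only [coe_filter, Fintype.mem_piFinset, Set.mem_ofPred_eq] at hm
    simp [hm.2]
  · intro s hs hs'
    rw [mem_piAntidiag] at hs
    obtain ⟨j, hj⟩ : ∃ j : Fin n, ¬ (j + 1 : ℕ) ∣ s j := by
      by_contra! hdvd
      refine hs' ⟨fun j => s j / (j + 1), ?_, funext fun j => Nat.mul_div_cancel' (hdvd j)⟩
      simp only [coe_filter, Fintype.mem_piFinset, mem_range, Set.mem_ofPred_eq,
        Nat.mul_div_cancel' (hdvd _), hs.1, and_true]
      exact fun j => Nat.lt_succ_of_le <| (Nat.div_le_self _ _).trans <|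
        hs.1 ▸ single_le_sum (fun _ _ => Nat.zero_le _) (mem_univ j)
    rw [prod_eq_zero (mem_univ j) (by simp [expMonomial, hj]), mul_zero]
  · intro m _
    simp only [expMonomial, coeff_mk, dvd_mul_right, if_true,
      Nat.mul_div_cancel_left _ (Nat.succ_pos _)]
    rw [prod_div_distrib]
    ring

end Field

end PowerSeries

namespace PartitionSums

variable {K ι : Type*} [Field K] [Fintype ι]

section

variable (N : K) (y : ι → K)

/-- The coefficient of `X ^ d` in `-N X - ∑ l, log (1 - y l X)`, the logarithm of
`expProdGeom N y`. -/
def logCoeff (d : ℕ) : K := (if d = 1 then -N else 0) + 1 / (d : K) * ∑ l, y l ^ d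

def expProdGeom : K⟦X⟧ := expMonomial (-N) 1 * ∏ l, geomSeries (y l)

variable [CharZero K]

theorem derivative_expProdGeom :
    d⁄dX K (expProdGeom N y) =
      (C (-N) + ∑ l, C (y l) * geomSeries (y l)) * expProdGeom N y := by
  rw [expProdGeom, Derivation.leibniz, smul_eq_mul, smul_eq_mul,
    Derivation.map_prod_of_map_eq_mul _ _ _ _ fun l _ => derivative_geomSeries (y l),
    ← zero_add 1, derivative_expMonomial, monomial_zero_eq_C_apply]
  simp only [Nat.cast_zero, zero_add, mul_one]
  ring

theorem coeff_logDeriv_expProdGeom (i : ℕ) :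
    coeff i (C (-N) + ∑ l, C (y l) * geomSeries (y l)) = logCoeff N y (i + 1) * (i + 1) := by
  simp only [map_add, map_sum, coeff_C, coeff_C_mul, geomSeries, coeff_mk, logCoeff,
    Nat.add_eq_right]
  have hi : (i + 1 : K) ≠ 0 := i.cast_add_one_ne_zero
  split_ifs with h
  · subst h; simp [pow_succ]
  · push_cast
    field_simp
    simp [pow_succ']

theorem coeff_prod_expMonomial_logCoeff (n : ℕ) :
    coeff n (∏ j : Fin n, expMonomial (logCoeff N y (j + 1)) (j + 1)) =
      coeff n (expProdGeom N y) := by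
  refine coeff_eq_coeff_of_derivative_eq_mul
    (Derivation.map_prod_of_map_eq_mul _ _ _ _ fun j _ => derivative_expMonomial _ _)
    (derivative_expProdGeom N y) ?_ (fun i hi => ?_) n le_rfl
  · simp [expProdGeom, expMonomial, geomSeries, map_prod]
  · rw [coeff_logDeriv_expProdGeom, map_sum]
    simp only [coeff_monomial]
    rw [Fin.sum_univ_eq_sum_range (fun j => if i = j then logCoeff N y (j + 1) * (j + 1) else 0),
      sum_ite_eq, if_pos (mem_range.mpr hi)]

theorem factorial_mul_coeff_expProdGeom [DecidableEq ι] (n : ℕ) :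
    (n ! : K) * coeff n (expProdGeom N y) =
      ∑ s ∈ (Fintype.piFinset fun _ : ι => range (n + 1)).filter (fun s => ∑ l, s l ≤ n),
        (-N) ^ (n - ∑ l, s l) * (n.choose (∑ l, s l) : K) * ((∑ l, s l)! : K) *
          ∏ l, y l ^ s l := by
  have hmaps : ∀ s ∈ (Fintype.piFinset fun _ : ι => range (n + 1)).filter
      (fun s => ∑ l, s l ≤ n), ∑ l, s l ∈ range (n + 1) :=
    fun s hs => mem_range_succ_iff.mpr (mem_filter.mp hs).2
  rw [expProdGeom, mul_comm (expMonomial _ _), coeff_mul,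
    Nat.sum_antidiagonal_eq_sum_range_succ fun b a => coeff b _ * coeff a _, mul_sum,
    ← sum_fiberwise_of_maps_to hmaps]
  refine sum_congr rfl fun b hb => ?_
  have hbn : b ≤ n := mem_range_succ_iff.mp hb
  have hfiber : {s ∈ {s ∈ Fintype.piFinset fun _ : ι => range (n + 1) | ∑ l, s l ≤ n} |
      ∑ l, s l = b} = piAntidiag univ b := by
    ext s
    simp only [mem_filter, Fintype.mem_piFinset, mem_range, mem_piAntidiag, mem_univ,
      implies_true, and_true]
    refine ⟨fun h => h.2, fun h => ⟨⟨fun l => ?_, h ▸ hbn⟩, h⟩⟩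
    exact Nat.lt_succ_of_le <| (single_le_sum (fun _ _ => Nat.zero_le _) (mem_univ l)).trans
      (h ▸ hbn)
  rw [hfiber, coeff_prod_geomSeries, sum_mul, mul_sum]
  refine sum_congr rfl fun s hs => ?_
  rw [(mem_piAntidiag.mp hs).1]
  simp only [expMonomial, coeff_mk, one_dvd, Nat.div_one, if_true]
  have hfac : (n ! : K) = n.choose b * b ! * (n - b)! := by
    exact_mod_cast (Nat.choose_mul_factorial_mul_factorial hbn).symm
  have : ((n - b)! : K) ≠ 0 := mod_cast (n - b).factorial_ne_zero
  rw [hfac]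
  field_simp

end

variable [CharZero K] [DecidableEq ι]

theorem sum_multiplicities_eq_sum_le (N : K) (w : ι → K) (n : ℕ) :
    ∑ m ∈ (Fintype.piFinset fun _ : Fin n => range (n + 1)).filter
          (fun m => ∑ j : Fin n, ((j : ℕ) + 1) * m j = n),
        ((n ! : K) / ∏ j, ((m j)! : K)) *
          ∏ j : Fin n,
            (if (j : ℕ) = 0 then -N + ∑ l, 1 / w l
              else (1 / ((j : ℕ) + 1) : K) * ∑ l, 1 / w l ^ ((j : ℕ) + 1)) ^ (m j) =
      ∑ s ∈ (Fintype.piFinset fun _ : ι => range (n + 1)).filter (fun s => ∑ l, s l ≤ n),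
        (-N) ^ (n - ∑ l, s l) * (n.choose (∑ l, s l) : K) * ((∑ l, s l)! : K) /
          ∏ l, w l ^ s l := by
  have hfactor : ∀ j : Fin n,
      (if (j : ℕ) = 0 then -N + ∑ l, 1 / w l
        else (1 / ((j : ℕ) + 1) : K) * ∑ l, 1 / w l ^ ((j : ℕ) + 1)) =
        logCoeff N (fun l => (w l)⁻¹) (j + 1) := by
    intro j
    split_ifs with hj <;> simp [logCoeff, hj, inv_pow]
  simp only [hfactor]
  rw [← factorial_mul_coeff_prod_expMonomial, coeff_prod_expMonomial_logCoeff,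
    factorial_mul_coeff_expProdGeom]
  refine sum_congr rfl fun s _ => ?_
  simp only [div_eq_mul_inv, ← prod_inv_distrib, inv_pow]

theorem sum_multiplicities_eq_sum_eq (w : ι → K) (n : ℕ) :
    ∑ m ∈ (Fintype.piFinset fun _ : Fin n => range (n + 1)).filter
          (fun m => ∑ j : Fin n, ((j : ℕ) + 1) * m j = n),
        ((n ! : K) / ∏ j, ((m j)! : K)) *
          ∏ j : Fin n, ((1 / ((j : ℕ) + 1) : K) * ∑ l, 1 / w l ^ ((j : ℕ) + 1)) ^ (m j) =
      ∑ s ∈ (Fintype.piFinset fun _ : ι => range (n + 1)).filter (fun s => ∑ l, s l = n),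
        (n ! : K) / ∏ l, w l ^ s l := by
  refine Eq.trans ?_ ((sum_multiplicities_eq_sum_le 0 w n).trans ?_)
  · refine sum_congr rfl fun m _ => congrArg _ <| prod_congr rfl fun j _ => ?_
    split_ifs with hj <;> simp [hj]
  · rw [sum_filter, sum_filter]
    refine sum_congr rfl fun s _ => ?_
    rcases lt_trichotomy (∑ l, s l) n with h | h | h
    · simp [h.ne, h.le, Nat.sub_ne_zero_of_lt h]
    · simp [h]
    · simp [h.ne', h.not_ge]

end PartitionSums

open PartitionSums in
theorem powers_of_partition_sums_general (k r n : ℕ) (N : ℂ)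
    (w : Fin k → ℂ) :
    ((∑ m ∈ (Fintype.piFinset fun _ : Fin n => Finset.range (n + 1)).filter
          (fun m => ∑ j : Fin n, ((j : ℕ) + 1) * m j = n),
        ((n.factorial : ℂ) / ∏ j, ((m j).factorial : ℂ)) *
          ∏ j : Fin n,
            (if (j : ℕ) = 0 then -N + ∑ l, 1 / w l
              else (1 / ((j : ℕ) + 1) : ℂ) * ∑ l, 1 / w l ^ ((j : ℕ) + 1)) ^ (m j)) ^ r =
      ∑ s ∈ (Fintype.piFinset fun _ : Fin r => Fintype.piFinset fun _ : Fin k =>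
            Finset.range (n + 1)).filter (fun s => ∀ j, ∑ l, s j l ≤ n),
        (∏ j : Fin r, ((-N) ^ (n - ∑ l, s j l) * (n.choose (∑ l, s j l) : ℂ) *
            ((∑ l, s j l).factorial : ℂ))) /
          ∏ l : Fin k, w l ^ (∑ j, s j l)) ∧
    ((∑ m ∈ (Fintype.piFinset fun _ : Fin n => Finset.range (n + 1)).filter
          (fun m => ∑ j : Fin n, ((j : ℕ) + 1) * m j = n),
        ((n.factorial : ℂ) / ∏ j, ((m j).factorial : ℂ)) *
          ∏ j : Fin n,
            ((1 / ((j : ℕ) + 1) : ℂ) * ∑ l, 1 / w l ^ ((j : ℕ) + 1)) ^ (m j)) ^ r =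
      ∑ h ∈ (Fintype.piFinset fun _ : Fin r => Fintype.piFinset fun _ : Fin k =>
            Finset.range (n + 1)).filter (fun h => ∀ j, ∑ l, h j l = n),
        ((n.factorial : ℂ) ^ r) / ∏ l : Fin k, w l ^ (∑ j, h j l)) := by
  constructor
  · rw [sum_multiplicities_eq_sum_le, pow_sum_filter_div_prod_pow]
  · rw [sum_multiplicities_eq_sum_eq, pow_sum_filter_div_prod_pow]
    simp only [prod_const, card_univ, Fintype.card_fin]

/-- **Proposition (powers of the two partition sums).**
On the left-hand sides the sums run over all tuples `(m₁,…,mₙ)` of nonnegative integers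
(realised as `m : Fin n → ℕ`) with `m₁ + 2m₂ + ⋯ + n·mₙ = n`; the factor for `j = 1`
(Lean index `0`) is `(−N + Σ_l 1/w_l)^{m₁}` in (i) and `((1/1)·Σ_l 1/w_l)^{m₁}` in (ii),
and for `j ≥ 2` it is `((1/j)·Σ_l 1/w_l^j)^{m_j}`.  On the right-hand sides the sums run
over all matrices `s, h : Fin r → Fin k → ℕ` (with `s j l = s_{lj}`) such that
`Σ_l s_{lj} ≤ n`, resp. `Σ_l h_{lj} = n`, for each `j`. -/
theorem powers_of_partition_sums (k r n : ℕ) (hk : 1 ≤ k) (hr : 1 ≤ r) (N : ℂ)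
    (w : Fin k → ℂ) (hw : ∀ l, w l ≠ 0) :
    ((∑ m ∈ (Fintype.piFinset fun _ : Fin n => Finset.range (n + 1)).filter
          (fun m => ∑ j : Fin n, ((j : ℕ) + 1) * m j = n),
        ((n.factorial : ℂ) / ∏ j, ((m j).factorial : ℂ)) *
          ∏ j : Fin n,
            (if (j : ℕ) = 0 then -N + ∑ l, 1 / w l
              else (1 / ((j : ℕ) + 1) : ℂ) * ∑ l, 1 / w l ^ ((j : ℕ) + 1)) ^ (m j)) ^ r =
      ∑ s ∈ (Fintype.piFinset fun _ : Fin r => Fintype.piFinset fun _ : Fin k =>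
            Finset.range (n + 1)).filter (fun s => ∀ j, ∑ l, s j l ≤ n),
        (∏ j : Fin r, ((-N) ^ (n - ∑ l, s j l) * (n.choose (∑ l, s j l) : ℂ) *
            ((∑ l, s j l).factorial : ℂ))) /
          ∏ l : Fin k, w l ^ (∑ j, s j l)) ∧
    ((∑ m ∈ (Fintype.piFinset fun _ : Fin n => Finset.range (n + 1)).filter
          (fun m => ∑ j : Fin n, ((j : ℕ) + 1) * m j = n),
        ((n.factorial : ℂ) / ∏ j, ((m j).factorial : ℂ)) *
          ∏ j : Fin n,
            ((1 / ((j : ℕ) + 1) : ℂ) * ∑ l, 1 / w l ^ ((j : ℕ) + 1)) ^ (m j)) ^ r =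
      ∑ h ∈ (Fintype.piFinset fun _ : Fin r => Fintype.piFinset fun _ : Fin k =>
            Finset.range (n + 1)).filter (fun h => ∀ j, ∑ l, h j l = n),
        ((n.factorial : ℂ) ^ r) / ∏ l : Fin k, w l ^ (∑ j, h j l)) :=
  powers_of_partition_sums_general k r n N w
end
end

section
/- Let k ≥ 1 be an integer, X a complex number, and let f₁,…,f_k be complex-valued functions each of which is (2k−2)-times differentiable in a neighbourhood of X. Then Σ_{σ∈S_k} Σ_{τ∈S_k} sign(σ)·sign(τ) · ∏_{i=1}^{k} f_i^{(σ(i)+τ(i)−2)}(X) = Σ_{σ∈S_k} det_{k×k}( f_{σ(i)}^{(i+j−2)}(X) ); the left-hand side is the result of applying the differential operator Δ²(∂/∂L) = ∏_{1≤i<j≤k}(∂/∂L_j − ∂/∂L_i)² to the function (L₁,…,L_k) ↦ ∏_{i=1}^{k} f_i(L_i) and then evaluating at L₁ = ⋯ = L_k = X. In particular, if f₁ = ⋯ = f_k = f, then both sides equal k!·det_{k×k}( f^{(i+j−2)}(X) ). -/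
open Finset

noncomputable section

/-- **Lemma (the operator `Δ²(∂/∂L)` applied to `∏ fᵢ(Lᵢ)` at `L₁ = ⋯ = L_k = X`).**
The left-hand side `Σ_{σ,τ} sign(σ)sign(τ) ∏ᵢ fᵢ^{(σ(i)+τ(i)−2)}(X)` (which is the result of
applying `Δ²(∂/∂L) = ∏_{i<j}(∂/∂L_j − ∂/∂L_i)²` to `(L₁,…,L_k) ↦ ∏ᵢ fᵢ(Lᵢ)` and evaluating
at `Lᵢ = X`) equals `Σ_σ det_{k×k}(f_{σ(i)}^{(i+j−2)}(X))`.  With `0`-based indices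
`σ(i)+τ(i)−2` becomes `σ i + τ i` and `i+j−2` becomes `i+j`.  In particular, when all the
`fᵢ` are equal to one function `g`, both sides equal `k!·det_{k×k}(g^{(i+j−2)}(X))`. -/
theorem delta_squared_operator (k : ℕ) (hk : 1 ≤ k) (X : ℂ) (f : Fin k → ℂ → ℂ)
    (hf : ∀ i, ∀ m ≤ 2 * k - 2, ∀ᶠ y in nhds X, DifferentiableAt ℂ (iteratedDeriv m (f i)) y) :
    (∑ σ : Equiv.Perm (Fin k), ∑ τ : Equiv.Perm (Fin k),
        ((Equiv.Perm.sign σ : ℤ) : ℂ) * ((Equiv.Perm.sign τ : ℤ) : ℂ) *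
          ∏ i, iteratedDeriv ((σ i : ℕ) + (τ i : ℕ)) (f i) X =
      ∑ σ : Equiv.Perm (Fin k),
        (Matrix.of fun i j : Fin k => iteratedDeriv ((i : ℕ) + (j : ℕ)) (f (σ i)) X).det) ∧
    (∀ g : ℂ → ℂ, (∀ i, f i = g) →
      (∑ σ : Equiv.Perm (Fin k), ∑ τ : Equiv.Perm (Fin k),
          ((Equiv.Perm.sign σ : ℤ) : ℂ) * ((Equiv.Perm.sign τ : ℤ) : ℂ) *
            ∏ i, iteratedDeriv ((σ i : ℕ) + (τ i : ℕ)) (f i) X =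
        (k.factorial : ℂ) *
          (Matrix.of fun i j : Fin k => iteratedDeriv ((i : ℕ) + (j : ℕ)) g X).det) ∧
      (∑ σ : Equiv.Perm (Fin k),
          (Matrix.of fun i j : Fin k => iteratedDeriv ((i : ℕ) + (j : ℕ)) (f (σ i)) X).det =
        (k.factorial : ℂ) *
          (Matrix.of fun i j : Fin k => iteratedDeriv ((i : ℕ) + (j : ℕ)) g X).det)) := by
  have key : (∑ σ : Equiv.Perm (Fin k), ∑ τ : Equiv.Perm (Fin k),
        ((Equiv.Perm.sign σ : ℤ) : ℂ) * ((Equiv.Perm.sign τ : ℤ) : ℂ) *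
          ∏ i, iteratedDeriv ((σ i : ℕ) + (τ i : ℕ)) (f i) X) =
      ∑ σ : Equiv.Perm (Fin k),
        (Matrix.of fun i j : Fin k => iteratedDeriv ((i : ℕ) + (j : ℕ)) (f (σ i)) X).det := by
    have hdet : ∀ ρ : Equiv.Perm (Fin k),
        (Matrix.of fun i j : Fin k => iteratedDeriv ((i : ℕ) + (j : ℕ)) (f (ρ i)) X).det =
        ∑ π : Equiv.Perm (Fin k), ((Equiv.Perm.sign π : ℤ) : ℂ) *
          ∏ i, iteratedDeriv (((π i : ℕ)) + (i : ℕ)) (f (ρ (π i))) X := by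
      intro ρ
      rw [Matrix.det_apply']
      rfl
    simp_rw [hdet]
    -- bijection (σ, τ) ↦ (σ⁻¹, σ * τ⁻¹)
    have main := Fintype.sum_equiv
      (⟨fun p => (p.1⁻¹, p.1 * p.2⁻¹), fun q => (q.1⁻¹, q.2⁻¹ * q.1⁻¹),
        by intro p; simp [mul_assoc], by intro q; simp [mul_assoc]⟩ :
        Equiv.Perm (Fin k) × Equiv.Perm (Fin k) ≃ Equiv.Perm (Fin k) × Equiv.Perm (Fin k))
      (fun p => ((Equiv.Perm.sign p.1 : ℤ) : ℂ) * ((Equiv.Perm.sign p.2 : ℤ) : ℂ) *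
          ∏ i, iteratedDeriv ((p.1 i : ℕ) + (p.2 i : ℕ)) (f i) X)
      (fun p => ((Equiv.Perm.sign p.2 : ℤ) : ℂ) *
          ∏ i, iteratedDeriv ((p.2 i : ℕ) + (i : ℕ)) (f (p.1 (p.2 i))) X)
      ?_
    · rw [Fintype.sum_prod_type, Fintype.sum_prod_type] at main
      exact main
    rintro ⟨σ, τ⟩
    simp only [Equiv.coe_fn_mk]
    have hsign : (((Equiv.Perm.sign (σ * τ⁻¹) : ℤ)) : ℂ) =
        ((Equiv.Perm.sign σ : ℤ) : ℂ) * ((Equiv.Perm.sign τ : ℤ) : ℂ) := by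
      rw [Equiv.Perm.sign_mul, Equiv.Perm.sign_inv]
      push_cast
      ring
    rw [hsign]
    congr 1
    have := Equiv.prod_comp τ⁻¹
      (fun j => iteratedDeriv ((σ j : ℕ) + (τ j : ℕ)) (f j) X)
    rw [← this]
    refine Finset.prod_congr rfl fun i _ => ?_
    simp [Equiv.Perm.mul_apply]
  refine ⟨key, fun g hg => ?_⟩
  have h2 : (∑ σ : Equiv.Perm (Fin k),
      (Matrix.of fun i j : Fin k => iteratedDeriv ((i : ℕ) + (j : ℕ)) (f (σ i)) X).det) =
      (k.factorial : ℂ) *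
        (Matrix.of fun i j : Fin k => iteratedDeriv ((i : ℕ) + (j : ℕ)) g X).det := by
    have : ∀ σ : Equiv.Perm (Fin k),
        (Matrix.of fun i j : Fin k => iteratedDeriv ((i : ℕ) + (j : ℕ)) (f (σ i)) X).det =
        (Matrix.of fun i j : Fin k => iteratedDeriv ((i : ℕ) + (j : ℕ)) g X).det := by
      intro σ; simp [hg]
    simp_rw [this, Finset.sum_const, Finset.card_univ, Fintype.card_perm, Fintype.card_fin,
      nsmul_eq_mul]
  exact ⟨key.trans h2, h2⟩
end
end

section
/- Let k ≥ 1 and Q₁,…,Q_k ≥ 0 be integers and let N be a complex number. Then (1/(2πi)^{k}) ∮_{|w₁|=1} ⋯ ∮_{|w_k|=1} e^{N(w₁+⋯+w_k)} · Δ²(w) / ∏_{l=1}^{k} w_l^{2k+Q_l} dw₁⋯dw_k = Σ_{σ∈S_k} det_{k×k}( N^{2k+Q_{σ(i)}−1−(i+j−2)} / (2k+Q_{σ(i)}−1−(i+j−2))! ); every exponent 2k+Q_{σ(i)}−1−(i+j−2) occurring is a positive integer. -/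
/-!
Writing `Δ(w)` as a Vandermonde determinant and expanding `Δ(w)² = det V · det V` over pairs of
permutations `(σ, τ)`, the integrand becomes a signed sum of products of one-variable functions
`e^{N wᵢ} wᵢ^{σ i + τ i} / wᵢ^{2k + Qᵢ}`, so the `k`-fold integral factorises. Each factor is a
Cauchy coefficient, `∮ e^{Nz} z^p / z^m dz = 2πi N^{m-1-p} / (m-1-p)!`. Finally, permuting rows
turns the signed double sum over `(σ, τ)` into a sum over `σ` of the Hankel-type determinants.
-/

open Finset

noncomputable section

/-- The iterated contour integral `∮_{|w₁|=1} ⋯ ∮_{|w_n|=1} f(w₁,…,w_n) dw_n ⋯ dw₁`,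
each circle positively oriented. -/
def multiCircle : (n : ℕ) → ((Fin n → ℂ) → ℂ) → ℂ
  | 0, f => f ![]
  | n + 1, f => circleIntegral (fun w => multiCircle n (fun v => f (Fin.cons w v))) 0 1

open Matrix Equiv

section SignedPermutationSums

variable {R : Type*} [CommRing R] {n : ℕ}

theorem prod_sub_sq_eq_det_vandermonde_sq (w : Fin n → R) :
    (∏ p ∈ univ.filter (fun p : Fin n × Fin n => p.1 < p.2), (w p.1 - w p.2)) ^ 2 =
      (vandermonde w).det ^ 2 := by
  rw [det_vandermonde, ← prod_pow, prod_filter, Fintype.prod_prod_type, ← prod_pow]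
  refine prod_congr rfl fun i _ => ?_
  rw [← prod_pow, ← filter_lt_eq_Ioi, ← prod_filter]
  exact prod_congr rfl fun j _ => by rw [← neg_sub, neg_sq]

theorem det_vandermonde_eq_sum_sign_mul_prod_pow (w : Fin n → R) :
    (vandermonde w).det = ∑ σ : Perm (Fin n), (Perm.sign σ : R) * ∏ i, w i ^ (σ i : ℕ) := by
  rw [← det_transpose, det_apply']
  simp

theorem prod_sub_sq_eq_sum_sign_mul_sign_mul_prod_pow (w : Fin n → R) :
    (∏ p ∈ univ.filter (fun p : Fin n × Fin n => p.1 < p.2), (w p.1 - w p.2)) ^ 2 =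
      ∑ σ : Perm (Fin n), ∑ τ : Perm (Fin n),
        (Perm.sign σ : R) * Perm.sign τ * ∏ i, w i ^ (σ i + τ i : ℕ) := by
  rw [prod_sub_sq_eq_det_vandermonde_sq, det_vandermonde_eq_sum_sign_mul_prod_pow, sq,
    sum_mul_sum]
  simp_rw [pow_add, prod_mul_distrib]
  exact sum_congr rfl fun _ _ => sum_congr rfl fun _ _ => by ring

theorem sum_sign_mul_sign_mul_prod_add_eq_sum_det (f : Fin n → ℕ → R) :
    ∑ σ : Perm (Fin n), ∑ τ : Perm (Fin n),
        (Perm.sign σ : R) * Perm.sign τ * ∏ i, f i (σ i + τ i) =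
      ∑ σ : Perm (Fin n), (of fun i j : Fin n => f (σ i) (i + j)).det := by
  have hrow : ∀ σ : Perm (Fin n), ∑ τ : Perm (Fin n), (Perm.sign τ : R) * ∏ i, f i (σ i + τ i) =
      Perm.sign σ * (of fun i j : Fin n => f (σ⁻¹ i) (i + j)).det := by
    intro σ
    -- the matrix `f i (σ i + j)` is the `σ⁻¹`-matrix with its rows permuted by `σ`
    rw [← det_permute, ← det_transpose, det_apply']
    simp
  simp_rw [mul_assoc, ← mul_sum, hrow, ← mul_assoc, ← Int.cast_mul, ← Units.val_mul,
    Int.units_mul_self, Units.val_one, Int.cast_one, one_mul]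
  exact Fintype.sum_equiv (Equiv.inv _) _ _ fun _ => rfl

end SignedPermutationSums

theorem circleIntegral_exp_mul_mul_pow_div_pow (N : ℂ) {p m : ℕ} (h : p < m) :
    (∮ z in C(0, 1), Complex.exp (N * z) * z ^ p / z ^ m) =
      2 * Real.pi * Complex.I * (N ^ (m - 1 - p) / (m - 1 - p).factorial) := by
  obtain ⟨n, rfl⟩ : ∃ n, m = p + (n + 1) := ⟨m - 1 - p, by omega⟩
  have hexp : DifferentiableOn ℂ (fun z => Complex.exp (N * z)) (Metric.closedBall 0 1) := by
    fun_prop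
  have hcauchy := hexp.circleIntegral_one_div_sub_center_pow_smul one_pos n
  rw [iteratedDeriv_cexp_const_mul] at hcauchy
  have hcancel : Set.EqOn (fun z => Complex.exp (N * z) * z ^ p / z ^ (p + (n + 1)))
      (fun z => (1 / (z - 0) ^ (n + 1)) • Complex.exp (N * z)) (Metric.sphere 0 1) := by
    intro z hz
    have hz : z ≠ 0 := ne_zero_of_mem_sphere one_ne_zero ⟨z, hz⟩
    simp only [sub_zero, smul_eq_mul, pow_add]
    field_simp
  rw [circleIntegral.integral_congr zero_le_one hcancel, hcauchy]
  simp only [smul_eq_mul, mul_zero, Complex.exp_zero, mul_one,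
    show p + (n + 1) - 1 - p = n by omega]
  ring

theorem circleIntegrable_exp_mul_mul_pow_div_pow (N : ℂ) (p m : ℕ) :
    CircleIntegrable (fun z => Complex.exp (N * z) * z ^ p / z ^ m) 0 1 :=
  ContinuousOn.circleIntegrable zero_le_one <| ContinuousOn.div (by fun_prop) (by fun_prop)
    fun z hz => pow_ne_zero _ (ne_zero_of_mem_sphere one_ne_zero ⟨z, hz⟩)

theorem multiCircle_sum_mul_prod {ι : Type*} (s : Finset ι) {n : ℕ} (c : ι → ℂ)
    {g : ι → Fin n → ℂ → ℂ} (hg : ∀ a ∈ s, ∀ i, CircleIntegrable (g a i) 0 1) :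
    multiCircle n (fun w => ∑ a ∈ s, c a * ∏ i, g a i (w i)) =
      ∑ a ∈ s, c a * ∏ i, ∮ z in C(0, 1), g a i z := by
  induction n generalizing c with
  | zero => simp [multiCircle]
  | succ n ih =>
    have hinner : ∀ z, (multiCircle n fun v => ∑ a ∈ s, c a * ∏ i, g a i (Fin.cons z v i)) =
        ∑ a ∈ s, (c a * ∏ i : Fin n, ∮ y in C(0, 1), g a i.succ y) * g a 0 z := by
      intro z
      simp_rw [Fin.prod_univ_succ, Fin.cons_zero, Fin.cons_succ, ← mul_assoc]
      rw [ih (fun a => c a * g a 0 z) (fun a ha i => hg a ha i.succ)]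
      exact sum_congr rfl fun a _ => by ring
    simp only [multiCircle, hinner]
    rw [circleIntegral.integral_fun_sum
      (f := fun a z => (c a * ∏ i : Fin n, ∮ y in C(0, 1), g a i.succ y) * g a 0 z)
      fun a ha => (hg a ha 0).const_fun_smul]
    simp_rw [circleIntegral.integral_const_mul, Fin.prod_univ_succ]
    exact sum_congr rfl fun a _ => by ring

theorem exp_mul_sum_mul_prod_sub_sq_div_prod_pow (N : ℂ) {n : ℕ} (m : Fin n → ℕ)
    (w : Fin n → ℂ) :
    Complex.exp (N * ∑ i, w i) *
        (∏ p ∈ univ.filter (fun p : Fin n × Fin n => p.1 < p.2), (w p.1 - w p.2)) ^ 2 /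
        ∏ i, w i ^ m i =
      ∑ σ : Perm (Fin n), ∑ τ : Perm (Fin n), (Perm.sign σ : ℂ) * Perm.sign τ *
        ∏ i, Complex.exp (N * w i) * w i ^ (σ i + τ i : ℕ) / w i ^ m i := by
  rw [mul_sum univ w N, Complex.exp_sum, prod_sub_sq_eq_sum_sign_mul_sign_mul_prod_pow]
  simp_rw [mul_sum, sum_div, prod_div_distrib, prod_mul_distrib]
  exact sum_congr rfl fun _ _ => sum_congr rfl fun _ _ => by ring

/-- With `0`-based indices the exponent `2k+Q_{σ(i)}−1−(i+j−2)` becomes `2k+Q(σ i)−1−(i+j)`. -/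
theorem multi_contour_integral_vandermonde_general (k : ℕ) (Q : Fin k → ℕ) (N : ℂ) :
    (((2 * (Real.pi : ℂ) * Complex.I) ^ k)⁻¹ *
        multiCircle k (fun w =>
          Complex.exp (N * ∑ i, w i) *
            (∏ p ∈ Finset.univ.filter (fun p : Fin k × Fin k => p.1 < p.2),
              (w p.1 - w p.2)) ^ 2 /
            ∏ l, w l ^ (2 * k + Q l)) =
      ∑ σ : Equiv.Perm (Fin k),
        (Matrix.of fun i j : Fin k =>
          N ^ (2 * k + Q (σ i) - 1 - ((i : ℕ) + (j : ℕ))) /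
            ((2 * k + Q (σ i) - 1 - ((i : ℕ) + (j : ℕ))).factorial : ℂ)).det) ∧
    (∀ σ : Equiv.Perm (Fin k), ∀ i j : Fin k, (i : ℕ) + (j : ℕ) < 2 * k + Q (σ i) - 1) := by
  refine ⟨?_, fun σ i j => by omega⟩
  have hexponent (σ τ : Perm (Fin k)) (i : Fin k) : (σ i + τ i : ℕ) < 2 * k + Q i := by omega
  simp_rw [exp_mul_sum_mul_prod_sub_sq_div_prod_pow, ← Fintype.sum_prod_type']
  rw [multiCircle_sum_mul_prod _ _ fun _ _ _ => circleIntegrable_exp_mul_mul_pow_div_pow N _ _]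
  simp_rw [circleIntegral_exp_mul_mul_pow_div_pow N (hexponent _ _ _), prod_mul_distrib,
    prod_const, card_univ, Fintype.card_fin]
  -- `prod_mul_distrib` split the `k` factors `2πi` into `2 ^ k * π ^ k * I ^ k`; regroup them
  simp_rw [← mul_pow, mul_left_comm _ ((2 * (Real.pi : ℂ) * Complex.I) ^ k), ← mul_sum]
  rw [inv_mul_cancel_left₀ (pow_ne_zero _ Complex.two_pi_I_ne_zero), Fintype.sum_prod_type]
  exact sum_sign_mul_sign_mul_prod_add_eq_sum_det
    fun i p => N ^ (2 * k + Q i - 1 - p) / (2 * k + Q i - 1 - p).factorial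

/-- **Proposition (a `k`-fold contour integral with Vandermonde squared).**
Here `Δ²(w) = (∏_{i<j}(wᵢ−w_j))²`, and the right-hand sum runs over all permutations
`σ ∈ S_k`.  With `0`-based indices the exponent `2k+Q_{σ(i)}−1−(i+j−2)` becomes
`2k+Q(σ i)−1−(i+j)`; the final clause records that each such exponent is a positive
integer. -/
theorem multi_contour_integral_vandermonde (k : ℕ) (hk : 1 ≤ k) (Q : Fin k → ℕ) (N : ℂ) :
    (((2 * (Real.pi : ℂ) * Complex.I) ^ k)⁻¹ *
        multiCircle k (fun w =>
          Complex.exp (N * ∑ i, w i) *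
            (∏ p ∈ Finset.univ.filter (fun p : Fin k × Fin k => p.1 < p.2),
              (w p.1 - w p.2)) ^ 2 /
            ∏ l, w l ^ (2 * k + Q l)) =
      ∑ σ : Equiv.Perm (Fin k),
        (Matrix.of fun i j : Fin k =>
          N ^ (2 * k + Q (σ i) - 1 - ((i : ℕ) + (j : ℕ))) /
            ((2 * k + Q (σ i) - 1 - ((i : ℕ) + (j : ℕ))).factorial : ℂ)).det) ∧
    (∀ σ : Equiv.Perm (Fin k), ∀ i j : Fin k, (i : ℕ) + (j : ℕ) < 2 * k + Q (σ i) - 1) :=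
  multi_contour_integral_vandermonde_general k Q N
end
end

section
/- Let k ≥ 1 be an integer and let m₁,…,m_k be nonnegative integers. Then det_{k×k}( 1/(2k+1+m_i−i−j)! ) = ( ∏_{i=1}^{k} 1/(2k−i+m_i)! ) · ∏_{1≤i<j≤k} ( m_j − m_i − j + i ); here every argument 2k+1+m_i−i−j of the factorials on the left is at least 1. -/
/-!
Writing `xᵢ = 2k − i + mᵢ` and indexing columns by `j = 0, …, k − 1`, the `(i, j)` entry is
`(xᵢ − j)!⁻¹ = xᵢ!⁻¹ · xᵢ(xᵢ − 1)⋯(xᵢ − j + 1)`.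
Pulling `xᵢ!⁻¹` out of row `i` leaves the matrix of the monic degree-`j` polynomials
`descPochhammer j` evaluated at the `xᵢ`, whose determinant is the Vandermonde
determinant `∏_{i<j} (x_j − xᵢ)`, and `x_j − xᵢ = m_j − mᵢ − j + i`.
-/

open Finset

theorem Finset.prod_filter_fst_lt_snd {ι M : Type*} [Fintype ι] [LinearOrder ι]
    [LocallyFiniteOrderTop ι] [CommMonoid M] (f : ι → ι → M) :
    ∏ p ∈ univ.filter (fun p : ι × ι => p.1 < p.2), f p.1 p.2 = ∏ i, ∏ j ∈ Ioi i, f i j := by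
  rw [prod_filter, Fintype.prod_prod_type]
  refine prod_congr rfl fun i _ => ?_
  rw [← filter_lt_eq_Ioi, prod_filter]

theorem Matrix.det_descPochhammer_eval {R : Type*} [CommRing R] [IsDomain R] {n : ℕ}
    (v : Fin n → R) :
    (Matrix.of fun i j : Fin n => (descPochhammer R j).eval (v i)).det =
      ∏ i, ∏ j ∈ Ioi i, (v j - v i) := by
  rw [← det_eval_matrixOfPolynomials_eq_det_vandermonde v _
    (fun j => descPochhammer_natDegree R j) (fun j => monic_descPochhammer R j), det_vandermonde]

theorem Matrix.det_descFactorial {R : Type*} [CommRing R] [IsDomain R] {n : ℕ}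
    (x : Fin n → ℕ) :
    (Matrix.of fun i j : Fin n => ((x i).descFactorial j : R)).det =
      ∏ i, ∏ j ∈ Ioi i, ((x j : R) - x i) := by
  simpa only [descPochhammer_eval_eq_descFactorial] using det_descPochhammer_eval fun i => (x i : R)

theorem Nat.one_div_factorial_sub {K : Type*} [Field K] [CharZero K] {n j : ℕ} (h : j ≤ n) :
    1 / ((n - j).factorial : K) = 1 / (n.factorial : K) * n.descFactorial j := by
  rw [← Nat.factorial_mul_descFactorial h, Nat.cast_mul]
  have : ((n.descFactorial j : ℕ) : K) ≠ 0 := by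
    exact_mod_cast (Nat.descFactorial_pos.2 h).ne'
  field_simp

theorem Matrix.det_one_div_factorial_sub {K : Type*} [Field K] [CharZero K] {n : ℕ}
    (x : Fin n → ℕ) (hx : ∀ i, n ≤ x i + 1) :
    (Matrix.of fun i j : Fin n => 1 / ((x i - j).factorial : K)).det =
      (∏ i, 1 / ((x i).factorial : K)) * ∏ i, ∏ j ∈ Ioi i, ((x j : K) - x i) := by
  have hentry : ∀ i j : Fin n,
      1 / ((x i - j).factorial : K) = 1 / ((x i).factorial : K) * (x i).descFactorial j :=
    fun i j => Nat.one_div_factorial_sub (by have := hx i; omega)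
  simp_rw [hentry]
  exact (det_mul_column _ (of fun i j : Fin n => ((x i).descFactorial j : K))).trans
    (congrArg _ (det_descFactorial x))

theorem det_reciprocal_factorials_general (k : ℕ) (m : Fin k → ℕ) :
    (Matrix.of fun i j : Fin k =>
        (1 : ℝ) / ((2 * k + 1 + m i - ((i : ℕ) + 1) - ((j : ℕ) + 1)).factorial : ℝ)).det =
      (∏ i : Fin k, (1 : ℝ) / ((2 * k - ((i : ℕ) + 1) + m i).factorial : ℝ)) *
        ∏ p ∈ Finset.univ.filter (fun p : Fin k × Fin k => p.1 < p.2),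
          ((((m p.2 : ℤ) - (m p.1 : ℤ) - ((p.2 : ℕ) : ℤ) + ((p.1 : ℕ) : ℤ)) : ℤ) : ℝ) := by
  have hx : ∀ i : Fin k, k ≤ 2 * k - ((i : ℕ) + 1) + m i + 1 := fun i => by omega
  have hentry : ∀ i j : Fin k,
      2 * k + 1 + m i - ((i : ℕ) + 1) - ((j : ℕ) + 1) = 2 * k - ((i : ℕ) + 1) + m i - j :=
    fun i j => by omega
  have hdiff : ∀ i j : Fin k,
      ((2 * k - ((j : ℕ) + 1) + m j : ℕ) : ℝ) - (2 * k - ((i : ℕ) + 1) + m i : ℕ) =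
        (((m j : ℤ) - m i - (j : ℕ) + (i : ℕ) : ℤ) : ℝ) := fun i j => by
    push_cast [Nat.cast_sub (show (i : ℕ) + 1 ≤ 2 * k by omega),
      Nat.cast_sub (show (j : ℕ) + 1 ≤ 2 * k by omega)]
    ring
  simp_rw [hentry, Matrix.det_one_div_factorial_sub _ hx,
    prod_filter_fst_lt_snd fun i j : Fin k => (((m j : ℤ) - m i - (j : ℕ) + (i : ℕ) : ℤ) : ℝ),
    hdiff]

/-- **Lemma (a determinant of reciprocal factorials).**
`det_{k×k}(1/(2k+1+mᵢ−i−j)!) = (∏ᵢ 1/(2k−i+mᵢ)!)·∏_{i<j}(m_j−mᵢ−j+i)`.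
With `0`-based indices `i,j : Fin k` the entry index `2k+1+mᵢ−i−j` becomes
`2k+1+m i−(i+1)−(j+1)` (each such argument is at least `1`), and `−j+i` (1-based)
equals `−(p.2)+p.1` (0-based). -/
theorem det_reciprocal_factorials (k : ℕ) (hk : 1 ≤ k) (m : Fin k → ℕ) :
    (Matrix.of fun i j : Fin k =>
        (1 : ℝ) / ((2 * k + 1 + m i - ((i : ℕ) + 1) - ((j : ℕ) + 1)).factorial : ℝ)).det =
      (∏ i : Fin k, (1 : ℝ) / ((2 * k - ((i : ℕ) + 1) + m i).factorial : ℝ)) *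
        ∏ p ∈ Finset.univ.filter (fun p : Fin k × Fin k => p.1 < p.2),
          ((((m p.2 : ℤ) - (m p.1 : ℤ) - ((p.2 : ℕ) : ℤ) + ((p.1 : ℕ) : ℤ)) : ℤ) : ℝ) :=
  det_reciprocal_factorials_general k m
end
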